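/- Let Δ > 0 and let g : [0,Δ] → ℝ be a continuous function such that lim_{x→0+} g(x)/x exists (finite). Let a : (0,∞) → ℝ be bounded, let b : (0,∞) → [0,Δ], and let γ : (0,∞) → (0,∞). Then δ·[ Σ_{k=0}^∞ a(δ)·g(b(δ)·e^{−(2k+1)δ}) − (1/(2π))·∬_{ℝ²} a(δ)·g(b(δ)·σ_δ^{(γ(δ))}(x,ξ)) dx dξ ] → 0 as δ → 0+. -/

import Mathlib

/-!
With `ψ(t) = g(b e^{-t})`, polar coordinates and the substitution `σ = e^{-t}` turn the phase-space
integral into `(π / tanh δ) ∫_{log cosh δ}^∞ ψ`, while `δ Σ_k ψ((2k+1)δ)` is half the midpoint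
Riemann sum of `∫_0^∞ ψ` with mesh `2δ`. Writing that sum as the integral of `ψ` evaluated at the
midpoint of the cell containing `t`, dominated convergence shows that it converges to the integral:
the majorant comes from `|g x| ≤ K x`, the pointwise convergence from the uniform continuity of `g`
on `[0, Δ]`. The two remaining discrepancies, from the lower limit `log cosh δ → 0` and from
`δ / tanh δ → 1`, vanish because `∫ |ψ|` stays bounded.
-/

open Real Filter Set MeasureTheory Topology
open scoped Uniformity

theorem tanh_pos_of_pos {x : ℝ} (hx : 0 < x) : 0 < tanh x := by
  rw [tanh_eq_sinh_div_cosh]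
  exact div_pos (sinh_pos_iff.2 hx) (cosh_pos x)

theorem measurePreserving_mul_prodMap_inv_mul {c : ℝ} (hc : c ≠ 0) :
    MeasurePreserving (fun p : ℝ × ℝ => (c * p.1, c⁻¹ * p.2)) := by
  refine ⟨by fun_prop, ?_⟩
  have hmap : Measure.map (Prod.map (c * ·) (c⁻¹ * ·)) (volume.prod volume : Measure (ℝ × ℝ))
      = volume.prod volume := by
    rw [← Measure.map_prod_map _ _ (measurable_const_mul c) (measurable_const_mul c⁻¹),
      Real.map_volume_mul_left hc, Real.map_volume_mul_left (inv_ne_zero hc),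
      Measure.prod_smul_left, Measure.prod_smul_right, smul_smul,
      ← ENNReal.ofReal_mul (abs_nonneg _), ← abs_mul, inv_inv, inv_mul_cancel₀ hc, abs_one, ENNReal.ofReal_one, one_smul]
  rw [Measure.volume_eq_prod]
  exact hmap

theorem integral_comp_mul_prodMap_inv_mul {E : Type*} [NormedAddCommGroup E] [NormedSpace ℝ E]
    (F : ℝ × ℝ → E) {c : ℝ} (hc : c ≠ 0) :
    ∫ p : ℝ × ℝ, F (c * p.1, c⁻¹ * p.2) = ∫ p, F p :=
  (measurePreserving_mul_prodMap_inv_mul hc).integral_comp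
    ((Homeomorph.mulLeft₀ c hc).prodCongr
      (Homeomorph.mulLeft₀ c⁻¹ (inv_ne_zero hc))).measurableEmbedding F

theorem integral_Ioi_comp_add_right {E : Type*} [NormedAddCommGroup E] [NormedSpace ℝ E]
    (f : ℝ → E) (a m : ℝ) :
    ∫ x in Ioi a, f (x + m) = ∫ x in Ioi (a + m), f x := by
  rw [← integral_indicator measurableSet_Ioi, ← integral_indicator measurableSet_Ioi]
  conv_rhs => rw [← integral_add_right_eq_self _ m]
  congr with x
  simp [indicator]

theorem integral_comp_sq_add_sq (f : ℝ → ℝ) :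
    ∫ p : ℝ × ℝ, f (p.1 ^ 2 + p.2 ^ 2) = π * ∫ s in Ioi 0, f s := by
  have hpolar : ∀ p : ℝ × ℝ,
      p.1 • f ((polarCoord.symm p).1 ^ 2 + (polarCoord.symm p).2 ^ 2) = p.1 * f (p.1 ^ 2) * 1 := by
    intro p
    simp only [polarCoord_symm_apply, smul_eq_mul, mul_one, mul_pow, ← mul_add, cos_sq_add_sin_sq]
  have hradial : ∫ r in Ioi (0 : ℝ), r * f (r ^ 2) = 2⁻¹ * ∫ s in Ioi 0, f s := by
    rw [← integral_comp_rpow_Ioi f two_ne_zero, ← integral_const_mul]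
    refine setIntegral_congr_fun measurableSet_Ioi fun r _ => ?_
    norm_num
    ring
  rw [← integral_comp_polarCoord_symm, polarCoord_target, Measure.volume_eq_prod,
    ← Measure.prod_restrict, integral_congr_ae (ae_of_all _ hpolar),
    integral_prod_mul (fun r => r * f (r ^ 2)) (fun _ => (1 : ℝ)), hradial, setIntegral_const,
    measureReal_def, Real.volume_Ioo, ENNReal.toReal_ofReal (by linarith [pi_pos])]
  simp only [smul_eq_mul, mul_one]
  ring

theorem integral_comp_mul_inv_sq_add_sq {c : ℝ} (hc : 0 < c) {γ : ℝ} (hγ : γ ≠ 0) (f : ℝ → ℝ) :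
    ∫ p : ℝ × ℝ, f (c * (γ⁻¹ ^ 2 * p.1 ^ 2 + γ ^ 2 * p.2 ^ 2)) = π / c * ∫ s in Ioi 0, f s := by
  have hscale := integral_comp_mul_prodMap_inv_mul (fun p => f (c * (p.1 ^ 2 + p.2 ^ 2)))
    (inv_ne_zero hγ)
  simp only [inv_inv, mul_pow] at hscale
  rw [hscale, integral_comp_sq_add_sq (fun s => f (c * s)), integral_comp_mul_left_Ioi f 0 hc,
    mul_zero, smul_eq_mul, ← mul_assoc, div_eq_mul_inv]

noncomputable def weylSymbol (δ γ : ℝ) (p : ℝ × ℝ) : ℝ :=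
  (cosh δ)⁻¹ * exp (-(tanh δ) * (γ⁻¹ ^ 2 * p.1 ^ 2 + γ ^ 2 * p.2 ^ 2))

theorem integral_comp_weylSymbol (F : ℝ → ℝ) {δ : ℝ} (hδ : 0 < δ) {γ : ℝ} (hγ : γ ≠ 0) :
    ∫ p, F (weylSymbol δ γ p) = π / tanh δ * ∫ t in Ioi (log (cosh δ)), F (exp (-t)) := by
  have hcosh : ∀ s, (cosh δ)⁻¹ * exp (-s) = exp (-(s + log (cosh δ))) := fun s => by
    rw [neg_add, exp_add, exp_neg (log _), exp_log (cosh_pos δ), mul_comm]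
  simp only [weylSymbol, neg_mul]
  rw [integral_comp_mul_inv_sq_add_sq (tanh_pos_of_pos hδ) hγ (fun s => F ((cosh δ)⁻¹ * exp (-s)))]
  simp only [hcosh]
  rw [integral_Ioi_comp_add_right (fun t => F (exp (-t))), zero_add]

theorem weylSymbol_mem_Icc {δ : ℝ} (hδ : 0 ≤ δ) (γ : ℝ) (p : ℝ × ℝ) :
    weylSymbol δ γ p ∈ Icc 0 1 := by
  have htanh : 0 ≤ tanh δ := by
    rw [tanh_eq_sinh_div_cosh]
    exact div_nonneg (sinh_nonneg_iff.2 hδ) (cosh_pos δ).le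
  refine ⟨by unfold weylSymbol; positivity, mul_le_one₀ (inv_le_one_of_one_le₀ (one_le_cosh δ))
    (exp_pos _).le (exp_le_one_iff.2 ?_)⟩
  have : 0 ≤ γ⁻¹ ^ 2 * p.1 ^ 2 + γ ^ 2 * p.2 ^ 2 := by positivity
  nlinarith

theorem integral_Ici_comp_natFloor_div {f : ℕ → ℝ} {h : ℝ} (hh : 0 < h)
    (hf : IntegrableOn (fun t => f ⌊t / h⌋₊) (Ici 0)) :
    ∫ t in Ici 0, f ⌊t / h⌋₊ = h * ∑' k, f k := by
  have hfloor : Measurable fun t : ℝ => ⌊t / h⌋₊ := (measurable_id.div_const h).nat_floor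
  have hcell : ∀ k : ℕ, (fun t : ℝ => ⌊t / h⌋₊) ⁻¹' {k} ∩ Ici 0 = Ico (k * h) ((k + 1) * h) := by
    intro k
    ext t
    simp only [mem_inter_iff, mem_preimage, mem_singleton_iff, mem_Ici, mem_Ico]
    constructor
    · rintro ⟨hk, ht⟩
      rw [Nat.floor_eq_iff (div_nonneg ht hh.le), le_div_iff₀ hh, div_lt_iff₀ hh] at hk
      exact hk
    · rintro ⟨hkt, htk⟩
      have ht : 0 ≤ t := (mul_nonneg k.cast_nonneg hh.le).trans hkt
      rw [Nat.floor_eq_iff (div_nonneg ht hh.le), le_div_iff₀ hh, div_lt_iff₀ hh]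
      exact ⟨⟨hkt, htk⟩, ht⟩
  -- The image of `volume` on `Ici 0` under `t ↦ ⌊t / h⌋₊` has mass `h` at every `k`.
  rw [← integral_map hfloor.aemeasurable (.of_discrete), integral_countable
    ((integrable_map_measure (.of_discrete) hfloor.aemeasurable).2 hf), ← tsum_mul_left]
  congr with k
  rw [smul_eq_mul, measureReal_def, Measure.map_apply hfloor (measurableSet_singleton k),
    Measure.restrict_apply (hfloor (measurableSet_singleton k)), hcell, Real.volume_Ico,
    ENNReal.toReal_ofReal (by nlinarith)]
  ring

noncomputable def floorMidpoint (h t : ℝ) : ℝ := (⌊t / h⌋₊ + 1 / 2) * h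

theorem measurable_floorMidpoint (h : ℝ) : Measurable (floorMidpoint h) := by
  unfold floorMidpoint
  fun_prop

theorem floorMidpoint_nonneg {h : ℝ} (hh : 0 ≤ h) (t : ℝ) : 0 ≤ floorMidpoint h t := by
  unfold floorMidpoint
  positivity

theorem abs_floorMidpoint_sub_le {h t : ℝ} (hh : 0 < h) (ht : 0 ≤ t) :
    |floorMidpoint h t - t| ≤ h / 2 := by
  have hle : (⌊t / h⌋₊ : ℝ) * h ≤ t := (le_div_iff₀ hh).1 (Nat.floor_le (div_nonneg ht hh.le))
  have hlt : t < (⌊t / h⌋₊ + 1) * h := (div_lt_iff₀ hh).1 (Nat.lt_floor_add_one _)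
  rw [abs_le]
  constructor <;> unfold floorMidpoint <;> linarith

theorem tendsto_floorMidpoint {ι : Type*} {l : Filter ι} {h : ι → ℝ} (hh : Tendsto h l (𝓝[>] 0))
    {t : ℝ} (ht : 0 ≤ t) : Tendsto (fun i => floorMidpoint (h i) t) l (𝓝 t) := by
  rw [tendsto_iff_norm_sub_tendsto_zero]
  refine squeeze_zero' (Eventually.of_forall fun _ => norm_nonneg _) ?_
    (by simpa using (tendsto_nhds_of_tendsto_nhdsWithin hh).div_const 2)
  filter_upwards [hh.eventually_mem self_mem_nhdsWithin] with i hi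
  exact abs_floorMidpoint_sub_le hi ht

theorem integrableOn_Ici_of_abs_le_exp {φ : ℝ → ℝ} {C : ℝ} (hφ : Measurable φ)
    (hdecay : ∀ t, 0 ≤ t → |φ t| ≤ C * exp (-t)) : IntegrableOn φ (Ici 0) :=
  (((integrableOn_Ici_iff_integrableOn_Ioi).2 (integrableOn_exp_neg_Ioi 0)).const_mul C).mono'
    hφ.aestronglyMeasurable (ae_restrict_of_forall_mem measurableSet_Ici hdecay)

theorem abs_comp_floorMidpoint_le {φ : ℝ → ℝ} {C h t : ℝ}
    (hdecay : ∀ t, 0 ≤ t → |φ t| ≤ C * exp (-t)) (hh : 0 < h) (ht : 0 ≤ t) :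
    |φ (floorMidpoint h t)| ≤ C * exp (h / 2) * exp (-t) := by
  have hC : 0 ≤ C := by simpa using (abs_nonneg _).trans (hdecay 0 le_rfl)
  calc |φ (floorMidpoint h t)| ≤ C * exp (-floorMidpoint h t) :=
        hdecay _ (floorMidpoint_nonneg hh.le t)
    _ ≤ C * exp (h / 2 + -t) := by
        gcongr
        linarith [(abs_le.1 (abs_floorMidpoint_sub_le hh ht)).1]
    _ = C * exp (h / 2) * exp (-t) := by rw [exp_add, mul_assoc]

theorem abs_comp_floorMidpoint_sub_le {φ : ℝ → ℝ} {C h t : ℝ}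
    (hdecay : ∀ t, 0 ≤ t → |φ t| ≤ C * exp (-t)) (hh : 0 < h) (hh2 : h ≤ 2) (ht : 0 ≤ t) :
    |φ (floorMidpoint h t) - φ t| ≤ (C * exp 1 + C) * exp (-t) := by
  have hC : 0 ≤ C := by simpa using (abs_nonneg _).trans (hdecay 0 le_rfl)
  calc |φ (floorMidpoint h t) - φ t| ≤ |φ (floorMidpoint h t)| + |φ t| := abs_sub _ _
    _ ≤ C * exp (h / 2) * exp (-t) + C * exp (-t) :=
        add_le_add (abs_comp_floorMidpoint_le hdecay hh ht) (hdecay t ht)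
    _ ≤ (C * exp 1 + C) * exp (-t) := by
        rw [add_mul]
        gcongr
        linarith

theorem midpoint_sum_eq_integral {φ : ℝ → ℝ} {C h : ℝ} (hφ : Continuous φ)
    (hdecay : ∀ t, 0 ≤ t → |φ t| ≤ C * exp (-t)) (hh : 0 < h) :
    h * ∑' k : ℕ, φ ((k + 1 / 2) * h) = ∫ t in Ici 0, φ (floorMidpoint h t) :=
  (integral_Ici_comp_natFloor_div (f := fun k : ℕ => φ ((k + 1 / 2) * h)) hh
    (integrableOn_Ici_of_abs_le_exp (hφ.measurable.comp (measurable_floorMidpoint h))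
      fun _ ht => abs_comp_floorMidpoint_le hdecay hh ht)).symm

theorem tendsto_midpoint_sum_sub_integral {ι : Type*} {l : Filter ι} [l.IsCountablyGenerated]
    {ψ : ι → ℝ → ℝ} {h : ι → ℝ} {C : ℝ} (hψ : ∀ i, Continuous (ψ i))
    (hh : Tendsto h l (𝓝[>] 0)) (hdecay : ∀ᶠ i in l, ∀ t, 0 ≤ t → |ψ i t| ≤ C * exp (-t))
    (hequi : ∀ t, 0 ≤ t → ∀ s : ι → ℝ, (∀ᶠ i in l, 0 ≤ s i) → Tendsto s l (𝓝 t) →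
      Tendsto (fun i => ψ i (s i) - ψ i t) l (𝓝 0)) :
    Tendsto (fun i => h i * (∑' k : ℕ, ψ i ((k + 1 / 2) * h i)) - ∫ t in Ioi 0, ψ i t) l (𝓝 0) := by
  have hpos : ∀ᶠ i in l, 0 < h i := hh.eventually_mem self_mem_nhdsWithin
  have hle : ∀ᶠ i in l, h i ≤ 2 :=
    (tendsto_nhds_of_tendsto_nhdsWithin hh).eventually (eventually_le_nhds two_pos)
  have hmeas : ∀ i, Measurable (ψ i) := fun i => (hψ i).measurable
  have heq : (fun i => ∫ t in Ici 0, ψ i (floorMidpoint (h i) t) - ψ i t) =ᶠ[l]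
      fun i => h i * (∑' k : ℕ, ψ i ((k + 1 / 2) * h i)) - ∫ t in Ioi 0, ψ i t := by
    filter_upwards [hpos, hdecay] with i hi hdi
    have hmid : IntegrableOn (fun t => ψ i (floorMidpoint (h i) t)) (Ici 0) :=
      integrableOn_Ici_of_abs_le_exp ((hmeas i).comp (measurable_floorMidpoint _))
        fun _ ht => abs_comp_floorMidpoint_le hdi hi ht
    rw [midpoint_sum_eq_integral (hψ i) hdi hi, ← integral_Ici_eq_integral_Ioi,
      integral_sub hmid (integrableOn_Ici_of_abs_le_exp (hmeas i) hdi)]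
  refine Tendsto.congr' heq ?_
  simpa using tendsto_integral_filter_of_dominated_convergence
    (μ := volume.restrict (Ici 0)) (fun t => (C * exp 1 + C) * exp (-t))
    (Eventually.of_forall fun i =>
      (((hmeas i).comp (measurable_floorMidpoint _)).sub (hmeas i)).aestronglyMeasurable)
    (by
      filter_upwards [hpos, hle, hdecay] with i hi hi2 hdi
      exact ae_restrict_of_forall_mem measurableSet_Ici fun t ht =>
        abs_comp_floorMidpoint_sub_le hdi hi hi2 ht)
    (((integrableOn_Ici_iff_integrableOn_Ioi).2 (integrableOn_exp_neg_Ioi 0)).const_mul _)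
    (ae_restrict_of_forall_mem measurableSet_Ici fun t ht =>
      hequi t ht _ (hpos.mono fun i hi => floorMidpoint_nonneg hi.le t)
        (tendsto_floorMidpoint hh ht))

theorem abs_integral_Ioi_le_of_abs_le_exp {φ : ℝ → ℝ} {C m : ℝ}
    (hdecay : ∀ t, 0 ≤ t → |φ t| ≤ C * exp (-t)) (hm : 0 ≤ m) : |∫ t in Ioi m, φ t| ≤ C := by
  have hC : 0 ≤ C := by simpa using (abs_nonneg _).trans (hdecay 0 le_rfl)
  calc |∫ t in Ioi m, φ t| ≤ ∫ t in Ioi m, C * exp (-t) :=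
        norm_integral_le_of_norm_le (f := φ) ((integrableOn_exp_neg_Ioi m).const_mul C)
          (ae_restrict_of_forall_mem measurableSet_Ioi fun t ht => hdecay t (hm.trans ht.le))
    _ = C * exp (-m) := by rw [integral_const_mul, integral_exp_neg_Ioi]
    _ ≤ C := mul_le_of_le_one_right hC (exp_le_one_iff.2 (neg_nonpos.2 hm))

theorem tendsto_integral_Ioi_sub_integral_Ioi {ι : Type*} {l : Filter ι} {ψ : ι → ℝ → ℝ}
    {m : ι → ℝ} {C : ℝ} (hψ : ∀ i, Measurable (ψ i))
    (hdecay : ∀ᶠ i in l, ∀ t, 0 ≤ t → |ψ i t| ≤ C * exp (-t))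
    (hm0 : ∀ᶠ i in l, 0 ≤ m i) (hm : Tendsto m l (𝓝 0)) :
    Tendsto (fun i => (∫ t in Ioi 0, ψ i t) - ∫ t in Ioi (m i), ψ i t) l (𝓝 0) := by
  refine squeeze_zero_norm' ?_ (by simpa using hm.abs.const_mul |C|)
  filter_upwards [hdecay, hm0] with i hdi hmi
  have hint : IntegrableOn (ψ i) (Ioi 0) :=
    (integrableOn_Ici_iff_integrableOn_Ioi).1 (integrableOn_Ici_of_abs_le_exp (hψ i) hdi)
  have hbound : ∀ t ∈ uIoc 0 (m i), ‖ψ i t‖ ≤ |C| := fun t ht => by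
    have ht0 : 0 < t := (uIoc_of_le hmi ▸ ht).1
    calc ‖ψ i t‖ ≤ C * exp (-t) := hdi t ht0.le
      _ ≤ |C| * 1 := by
        gcongr
        · exact le_abs_self C
        · exact exp_le_one_iff.2 (by linarith)
      _ = |C| := mul_one _
  rw [intervalIntegral.integral_Ioi_sub_Ioi hint hmi]
  simpa using intervalIntegral.norm_integral_le_of_norm_le_const hbound

theorem tendsto_div_tanh_nhdsNE_zero : Tendsto (fun x => x / tanh x) (𝓝[≠] 0) (𝓝 1) := by
  have hsinh : Tendsto (fun x => x⁻¹ * sinh x) (𝓝[≠] 0) (𝓝 1) := by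
    simpa [cosh_zero] using (hasDerivAt_sinh 0).tendsto_slope_zero
  have hcosh : Tendsto cosh (𝓝[≠] 0) (𝓝 1) :=
    cosh_zero ▸ continuous_cosh.continuousAt.tendsto.mono_left nhdsWithin_le_nhds
  have hprod : Tendsto (fun x => cosh x * (x⁻¹ * sinh x)⁻¹) (𝓝[≠] 0) (𝓝 1) := by
    simpa using hcosh.mul (hsinh.inv₀ one_ne_zero)
  refine hprod.congr fun x => ?_
  rw [tanh_eq_sinh_div_cosh, mul_inv, inv_inv, div_div_eq_mul_div]
  ring

theorem UniformContinuousOn.tendsto_sub_comp {α β ι : Type*} [UniformSpace α] [AddGroup α]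
    [IsUniformAddGroup α] [UniformSpace β] [AddGroup β] [IsUniformAddGroup β] {f : α → β}
    {s : Set α} (hf : UniformContinuousOn f s) {l : Filter ι} {u v : ι → α}
    (hu : ∀ᶠ i in l, u i ∈ s) (hv : ∀ᶠ i in l, v i ∈ s)
    (huv : Tendsto (fun i => v i - u i) l (𝓝 0)) :
    Tendsto (fun i => f (v i) - f (u i)) l (𝓝 0) := by
  have hpair : Tendsto (fun i => (u i, v i)) l (𝓤 α ⊓ 𝓟 (s ×ˢ s)) := by
    refine tendsto_inf.2 ⟨?_, tendsto_principal.2 (hu.and hv)⟩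
    rw [uniformity_eq_comap_nhds_zero α, tendsto_comap_iff]
    exact huv
  have := Tendsto.comp hf hpair
  rw [uniformity_eq_comap_nhds_zero β, tendsto_comap_iff] at this
  exact this

section ComparisonFunction

variable {G : ℝ → ℝ} {K B : ℝ}

theorem abs_comp_mul_exp_neg_le (hGK : ∀ x, |G x| ≤ K * |x|) {β : ℝ} (hβ : |β| ≤ B) (t : ℝ) :
    |G (β * exp (-t))| ≤ K * B * exp (-t) := by
  have hK : 0 ≤ K := by simpa using (abs_nonneg _).trans (hGK 1)
  calc |G (β * exp (-t))| ≤ K * (|β| * exp (-t)) := by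
        simpa [abs_mul, abs_of_pos (exp_pos _)] using hGK (β * exp (-t))
    _ ≤ K * (B * exp (-t)) := by gcongr
    _ = K * B * exp (-t) := (mul_assoc _ _ _).symm

theorem tendsto_comp_mul_exp_neg_sub (hG : Continuous G) {ι : Type*} {l : Filter ι}
    {b : ι → ℝ} (hb : ∀ᶠ i in l, |b i| ≤ B) {t : ℝ} (ht : 0 ≤ t) {s : ι → ℝ}
    (hs : ∀ᶠ i in l, 0 ≤ s i) (hst : Tendsto s l (𝓝 t)) :
    Tendsto (fun i => G (b i * exp (-s i)) - G (b i * exp (-t))) l (𝓝 0) := by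
  have hmem : ∀ {i x}, |b i| ≤ B → 0 ≤ x → b i * exp (-x) ∈ Icc (-B) B := fun hbi hx => by
    rw [mem_Icc, ← abs_le, abs_mul, abs_of_pos (exp_pos _)]
    exact (mul_le_of_le_one_right (abs_nonneg _) (exp_le_one_iff.2 (neg_nonpos.2 hx))).trans hbi
  refine (isCompact_Icc.uniformContinuousOn_of_continuous hG.continuousOn).tendsto_sub_comp
    (hb.mono fun i hbi => hmem hbi ht) ((hb.and hs).mono fun i h => hmem h.1 h.2) ?_
  have hexp : Tendsto (fun i => exp (-s i) - exp (-t)) l (𝓝 0) := by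
    simpa using ((continuous_exp.comp continuous_neg).tendsto t).comp hst |>.sub_const (exp (-t))
  simpa [mul_sub] using isBoundedUnder_le_mul_tendsto_zero (isBoundedUnder_of_eventually_le hb) hexp

theorem tendsto_szego_of_continuous (hG : Continuous G) (hGK : ∀ x, |G x| ≤ K * |x|)
    {a b γ : ℝ → ℝ} (ha : IsBoundedUnder (· ≤ ·) (𝓝[>] 0) (fun δ => ‖a δ‖))
    (hb : ∀ᶠ δ in 𝓝[>] 0, |b δ| ≤ B) (hγ : ∀ᶠ δ in 𝓝[>] 0, γ δ ≠ 0) :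
    Tendsto (fun δ => δ * ((∑' k : ℕ, a δ * G (b δ * exp (-((2 * k + 1) * δ)))) -
      1 / (2 * π) * ∫ p, a δ * G (b δ * weylSymbol δ (γ δ) p))) (𝓝[>] 0) (𝓝 0) := by
  have hψ : ∀ δ, Continuous fun t => G (b δ * exp (-t)) := fun δ => by fun_prop
  have hdecay : ∀ᶠ δ in 𝓝[>] 0, ∀ t, 0 ≤ t → |G (b δ * exp (-t))| ≤ K * B * exp (-t) :=
    hb.mono fun δ hbδ t _ => abs_comp_mul_exp_neg_le hGK hbδ t
  have hmesh : Tendsto (fun δ : ℝ => 2 * δ) (𝓝[>] 0) (𝓝[>] 0) :=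
    tendsto_nhdsWithin_iff.2 ⟨((continuous_const_mul 2).tendsto' 0 0 (mul_zero 2)).mono_left
      nhdsWithin_le_nhds, eventually_nhdsWithin_of_forall fun δ (hδ : 0 < δ) => mul_pos two_pos hδ⟩
  have hsum := tendsto_midpoint_sum_sub_integral hψ hmesh hdecay
    fun t ht s hs hst => tendsto_comp_mul_exp_neg_sub hG hb ht hs hst
  have hlogcosh : Tendsto (fun δ => log (cosh δ)) (𝓝[>] 0) (𝓝 0) := by
    simpa using ((continuous_cosh.log fun δ => (cosh_pos δ).ne').tendsto 0).mono_left
      nhdsWithin_le_nhds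
  have hshift := tendsto_integral_Ioi_sub_integral_Ioi (fun δ => (hψ δ).measurable) hdecay
    (Eventually.of_forall fun δ => log_nonneg (one_le_cosh δ)) hlogcosh
  have hratio : Tendsto (fun δ => (∫ t in Ioi (log (cosh δ)), G (b δ * exp (-t))) *
      (1 - δ / tanh δ)) (𝓝[>] 0) (𝓝 0) := by
    refine isBoundedUnder_le_mul_tendsto_zero ?_ ?_
    · exact isBoundedUnder_of_eventually_le (hdecay.mono fun δ hdδ =>
        abs_integral_Ioi_le_of_abs_le_exp hdδ (log_nonneg (one_le_cosh δ)))
    · simpa using (tendsto_div_tanh_nhdsNE_zero.mono_left (nhdsGT_le_nhdsNE 0)).const_sub 1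
  refine (isBoundedUnder_le_mul_tendsto_zero ha
    (by simpa using ((hsum.add hshift).add hratio).div_const 2)).congr' ?_
  -- With `ψ t = G (b δ * exp (-t))`, `S = Σ ψ ((2k+1)δ)` and `J m = ∫ t in Ioi m, ψ t`, the
  -- quantity is `a δ` times `((2δ S - J 0) + (J 0 - J m) + J m * (1 - δ / tanh δ)) / 2`
  -- with `m = log (cosh δ)`.
  filter_upwards [self_mem_nhdsWithin, hγ] with δ (hδ : 0 < δ) hγδ
  have htanh := (tanh_pos_of_pos hδ).ne'
  simp only [tsum_mul_left, integral_comp_weylSymbol (fun x => a δ * G (b δ * x)) hδ hγδ,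
    integral_const_mul]
  field_simp
  ring

end ComparisonFunction

section LinearAtZero

variable {g : ℝ → ℝ} {Δ L : ℝ}

theorem eq_zero_of_tendsto_div (hΔ : 0 < Δ) (hg : ContinuousWithinAt g (Icc 0 Δ) 0)
    (hL : Tendsto (fun x => g x / x) (𝓝[>] 0) (𝓝 L)) : g 0 = 0 := by
  have hright : Tendsto g (𝓝[>] 0) (𝓝 (g 0)) :=
    hg.mono_of_mem_nhdsWithin (mem_of_superset (Ioo_mem_nhdsGT hΔ) Ioo_subset_Icc_self)
  have hzero : Tendsto g (𝓝[>] 0) (𝓝 0) := by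
    refine (by simpa using hL.mul (tendsto_nhdsWithin_of_tendsto_nhds tendsto_id) :
      Tendsto (fun x => g x / x * x) (𝓝[>] 0) (𝓝 0)).congr' ?_
    filter_upwards [self_mem_nhdsWithin] with x (hx : 0 < x)
    exact div_mul_cancel₀ _ hx.ne'
  exact tendsto_nhds_unique hright hzero

theorem exists_abs_le_mul_of_tendsto_div (hΔ : 0 < Δ) (hg : ContinuousOn g (Icc 0 Δ))
    (hL : Tendsto (fun x => g x / x) (𝓝[>] 0) (𝓝 L)) : ∃ K, ∀ x ∈ Icc 0 Δ, |g x| ≤ K * x := by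
  classical
  -- `g x / x`, completed by `L` at `0`, is continuous on the compact `[0, Δ]`, hence bounded.
  have hq : ContinuousOn (Function.update (fun x => g x / x) 0 L) (Icc 0 Δ) := by
    intro x hx
    rcases eq_or_ne x 0 with rfl | hx0
    · rw [continuousWithinAt_update_same]
      exact hL.mono_left (nhdsWithin_mono _ fun y hy => lt_of_le_of_ne hy.1.1 (Ne.symm hy.2))
    · rw [continuousWithinAt_update_of_ne hx0]
      exact (hg x hx).div continuousWithinAt_id hx0
  obtain ⟨K, hK⟩ := isCompact_Icc.exists_bound_of_continuousOn hq
  refine ⟨K, fun x hx => ?_⟩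
  rcases eq_or_ne x 0 with rfl | hx0
  · simp [eq_zero_of_tendsto_div hΔ (hg 0 ⟨le_rfl, hΔ.le⟩) hL]
  · have hxpos : 0 < x := lt_of_le_of_ne hx.1 (Ne.symm hx0)
    have := hK x hx
    rw [Function.update_of_ne hx0, Real.norm_eq_abs, abs_div, abs_of_pos hxpos,
      div_le_iff₀ hxpos] at this
    exact this

theorem exists_continuous_eqOn_abs_le_mul (hΔ : 0 < Δ) (hg : ContinuousOn g (Icc 0 Δ))
    (hL : Tendsto (fun x => g x / x) (𝓝[>] 0) (𝓝 L)) :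
    ∃ G : ℝ → ℝ, ∃ K, Continuous G ∧ EqOn G g (Icc 0 Δ) ∧ ∀ x, |G x| ≤ K * |x| := by
  obtain ⟨K, hK⟩ := exists_abs_le_mul_of_tendsto_div hΔ hg hL
  have hK0 : 0 ≤ K := nonneg_of_mul_nonneg_left ((abs_nonneg _).trans (hK Δ ⟨hΔ.le, le_rfl⟩)) hΔ
  refine ⟨IccExtend hΔ.le ((Icc 0 Δ).domRestrict g), K,
    continuous_IccExtend_iff.2 hg.domRestrict, fun x hx => IccExtend_of_mem _ _ hx, fun x => ?_⟩
  have hproj := (projIcc 0 Δ hΔ.le x).2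
  calc |IccExtend hΔ.le ((Icc 0 Δ).domRestrict g) x| ≤ K * projIcc 0 Δ hΔ.le x := hK _ hproj
    _ ≤ K * |x| := by
      gcongr
      exact max_le (abs_nonneg x) ((min_le_right _ _).trans (le_abs_self x))

end LinearAtZero

theorem mul_mem_Icc_of_mem_Icc_zero_one {b Δ u : ℝ} (hb : b ∈ Icc 0 Δ) (hu : u ∈ Icc 0 1) :
    b * u ∈ Icc 0 Δ :=
  ⟨mul_nonneg hb.1 hu.1, (mul_le_of_le_one_right hb.1 hu.2).trans hb.2⟩

/-- Theorem 5 of the paper (the Szegő theorem of Appendix B): for `G(x,z) = a(x)·g(b(x)·z)`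
with `g : [0,Δ] → ℝ` continuous such that `lim_{x→0+} g(x)/x` exists, `a` bounded and
`b(δ) ∈ [0,Δ]`, the eigenvalue sum of the time–frequency localization operator is
asymptotically its Weyl-symbol integral:
`δ·[Σ_k a(δ)·g(b(δ)·e^{−(2k+1)δ}) − (1/(2π))·∬ a(δ)·g(b(δ)·σ_δ^{(γ(δ))}(x,ξ)) dx dξ] → 0`
as `δ → 0+`, where `σ_δ^{(γ)}(x,ξ) = (1/cosh δ)·exp(−tanh δ·(γ⁻²x² + γ²ξ²))`. -/
theorem szego_theorem
    (Δ : ℝ) (hΔ : 0 < Δ)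
    (g : ℝ → ℝ) (hg : ContinuousOn g (Set.Icc 0 Δ))
    (hg0 : ∃ L : ℝ, Filter.Tendsto (fun x : ℝ => g x / x) (nhdsWithin 0 (Set.Ioi 0)) (nhds L))
    (a b γ : ℝ → ℝ)
    (ha : ∃ M : ℝ, ∀ δ > 0, |a δ| ≤ M)
    (hb : ∀ δ > 0, b δ ∈ Set.Icc 0 Δ)
    (hγ : ∀ δ > 0, 0 < γ δ) :
    Filter.Tendsto
      (fun δ : ℝ =>
        δ * ((∑' k : ℕ, a δ * g (b δ * Real.exp (-((2 * (k : ℝ) + 1) * δ)))) -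
          (1 / (2 * π)) * ∫ p : ℝ × ℝ,
            a δ * g (b δ * ((Real.cosh δ)⁻¹ *
              Real.exp (-(Real.tanh δ) * ((γ δ)⁻¹ ^ 2 * p.1 ^ 2 + (γ δ) ^ 2 * p.2 ^ 2))))))
      (nhdsWithin 0 (Set.Ioi 0)) (nhds 0) := by
  obtain ⟨L, hL⟩ := hg0
  -- All arguments of `g` below lie in `[0, Δ]`, so `g` may be replaced by such an extension `G`.
  obtain ⟨G, K, hG, hGg, hGK⟩ := exists_continuous_eqOn_abs_le_mul hΔ hg hL
  obtain ⟨M, hM⟩ := ha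
  have hbΔ : ∀ᶠ δ in 𝓝[>] 0, b δ ∈ Icc 0 Δ := eventually_nhdsWithin_of_forall hb
  refine (tendsto_szego_of_continuous hG hGK
    (isBoundedUnder_of_eventually_le (eventually_nhdsWithin_of_forall hM))
    (hbΔ.mono fun δ hδ => abs_le.2 ⟨by linarith [hδ.1], hδ.2⟩)
    (eventually_nhdsWithin_of_forall fun δ hδ => (hγ δ hδ).ne')).congr' ?_
  filter_upwards [self_mem_nhdsWithin, hbΔ] with δ (hδ : 0 < δ) hbδ
  have hexp : ∀ k : ℕ, exp (-((2 * (k : ℝ) + 1) * δ)) ∈ Icc 0 1 := fun k =>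
    ⟨(exp_pos _).le, exp_le_one_iff.2 (by nlinarith)⟩
  simp only [hGg (mul_mem_Icc_of_mem_Icc_zero_one hbδ (hexp _)),
    hGg (mul_mem_Icc_of_mem_Icc_zero_one hbδ (weylSymbol_mem_Icc hδ.le _ _))]
  rfl
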